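/- Suppose A, B ⊆ ℕ satisfy s_A(x) → ∞ and d := d_{A,B} < ∞. Then liminf_{x→∞} s_B(x)/s_A(x − 2d) ≤ limsup_{x→∞} s_B(x)/s_A(x + 2d). (Equivalently, it is impossible that the liminf with the shifted-down argument strictly exceeds the limsup with the shifted-up argument.) -/

import Mathlib

open Filter

/-- Number of representations of `n` as `a i + a j`, `i ≤ j` (indices into the sequence `a`).
Since `a` is strictly increasing in all uses, `a i ≥ i`, so indices are bounded by `n`. -/
def Rf (a : ℕ → ℕ) (n : ℕ) : ℕ :=
  ((Finset.range (n+1) ×ˢ Finset.range (n+1)).filter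
    (fun p => p.1 ≤ p.2 ∧ a p.1 + a p.2 = n)).card

/-- `s_A(x) = max_{n ≤ x} R_A(n)`. -/
def sf (a : ℕ → ℕ) (x : ℕ) : ℕ := (Finset.range (x+1)).sup (Rf a)

/-- `d_{A,B}(x) = max_{t : a_t ≤ x ∨ b_t ≤ x} |a_t - b_t|`. For strictly increasing
sequences any such index `t` satisfies `t ≤ x`. -/
def df (a b : ℕ → ℕ) (x : ℕ) : ℕ :=
  (Finset.range (x+1)).sup (fun t => if a t ≤ x ∨ b t ≤ x then Nat.dist (a t) (b t) else 0)

/-- Number of representations of `n` as `p + q` with `p ≤ q`, `p, q ∈ A`. -/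
noncomputable def RS (A : Set ℕ) (n : ℕ) : ℕ :=
  Nat.card {p : ℕ × ℕ // p.1 ∈ A ∧ p.2 ∈ A ∧ p.1 ≤ p.2 ∧ p.1 + p.2 = n}

/-- `s_A(x) = max_{n ≤ x} R_A(n)` for a set `A`. -/
noncomputable def sS (A : Set ℕ) (x : ℕ) : ℕ := (Finset.range (x+1)).sup (RS A)

/-!
Since `|a t - b t| ≤ d` for every `t`, each representation `n = b i + b j` yields a
representation of one of the `4d + 1` numbers of `[n - 2d, n + 2d]` by `a`; hence
`s_B(x) ≤ (4d + 1) s_A(x + 2d)` and the ratios are bounded. As `s_A(x) ≤ x + 1` grows at most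
linearly, for every `r > 1` it cannot satisfy `s_A(y + 4d) > r s_A(y)` for all large `y`, so at
infinitely many `x = y + 2d` the two ratios differ by a factor at most `r`.
-/

open Topology

section Representations

variable {a b : ℕ → ℕ}

theorem Rf_le_succ (ha : StrictMono a) (n : ℕ) : Rf a n ≤ n + 1 := by
  rw [← Finset.card_range (n + 1)]
  refine Finset.card_le_card_of_injOn Prod.fst (fun p hp => ?_) fun p hp q hq hpq => ?_
  · simp only [Finset.coe_filter, Finset.mem_product, Set.mem_ofPred_eq] at hp
    exact hp.1.1
  · simp only [Finset.coe_filter, Finset.mem_product, Set.mem_ofPred_eq] at hp hq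
    have hfst : p.1 = q.1 := hpq
    exact Prod.ext hfst (ha.injective (by rw [hfst] at hp; omega))

theorem sf_mono (a : ℕ → ℕ) : Monotone (sf a) :=
  fun _ _ hxy => Finset.sup_mono (Finset.range_subset_range.mpr (by omega))

theorem Rf_le_sf {n x : ℕ} (hnx : n ≤ x) : Rf a n ≤ sf a x :=
  Finset.le_sup (Finset.mem_range.mpr (Nat.lt_succ_of_le hnx))

theorem sf_le_succ (ha : StrictMono a) (x : ℕ) : sf a x ≤ x + 1 :=
  Finset.sup_le fun n hn => (Rf_le_succ ha n).trans (by simp at hn; omega)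

theorem isBigO_sf (ha : StrictMono a) : (fun x => (sf a x : ℝ)) =O[atTop] fun x => (x : ℝ) :=
  Asymptotics.IsBigO.of_bound 2 <| (eventually_ge_atTop 1).mono fun x hx => by
    simp only [Real.norm_natCast]
    exact_mod_cast (sf_le_succ ha x).trans (by omega)

theorem dist_le_of_eventually_df_eq {d : ℕ} (hd : ∀ᶠ x in atTop, df a b x = d) (t : ℕ) :
    Nat.dist (a t) (b t) ≤ d := by
  obtain ⟨N, hN⟩ := eventually_atTop.mp hd
  set x := max N (max t (a t))
  have hle : (if a t ≤ x ∨ b t ≤ x then Nat.dist (a t) (b t) else 0) ≤ df a b x :=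
    Finset.le_sup (f := fun t => if a t ≤ x ∨ b t ≤ x then Nat.dist (a t) (b t) else 0)
      (Finset.mem_range.mpr (by omega))
  rw [if_pos (Or.inl (by omega)), hN x (le_max_left _ _)] at hle
  exact hle

theorem Rf_le_mul_sf_add (ha : StrictMono a) {d : ℕ} (hab : ∀ t, Nat.dist (a t) (b t) ≤ d)
    (n : ℕ) : Rf b n ≤ (4 * d + 1) * sf a (n + 2 * d) := by
  have hclose : ∀ t, a t ≤ b t + d ∧ b t ≤ a t + d := fun t => by
    have := hab t; unfold Nat.dist at this; omega
  rw [mul_comm, Rf]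
  calc _ ≤ sf a (n + 2 * d) * (Finset.Icc (n - 2 * d) (n + 2 * d)).card := by
        refine Finset.card_le_mul_card_image_of_maps_to (f := fun p => a p.1 + a p.2)
          (fun p hp => ?_) _ fun m hm => ?_
        · simp only [Finset.mem_filter, Finset.mem_product, Finset.mem_range] at hp
          have := hclose p.1; have := hclose p.2
          simp only [Finset.mem_Icc]; omega
        · simp only [Finset.mem_Icc] at hm
          refine (Finset.card_le_card fun p hp => ?_).trans (Rf_le_sf hm.2)
          simp only [Finset.mem_filter, Finset.mem_product, Finset.mem_range] at hp ⊢
          have := ha.le_apply (x := p.1); have := ha.le_apply (x := p.2)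
          omega
    _ ≤ sf a (n + 2 * d) * (4 * d + 1) := by
        gcongr; simp only [Nat.card_Icc]; omega

theorem sf_le_mul_sf_add (ha : StrictMono a) {d : ℕ} (hab : ∀ t, Nat.dist (a t) (b t) ≤ d)
    (x : ℕ) : sf b x ≤ (4 * d + 1) * sf a (x + 2 * d) :=
  Finset.sup_le fun n hn => (Rf_le_mul_sf_add ha hab n).trans <|
    Nat.mul_le_mul_left _ (sf_mono a (by simp at hn; omega))

end Representations

theorem frequently_apply_add_le_mul_of_isBigO {u : ℕ → ℝ} (hpos : ∀ᶠ x in atTop, 0 < u x)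
    (hlin : u =O[atTop] fun x => (x : ℝ)) (h : ℕ) {r : ℝ} (hr : 1 < r) :
    ∃ᶠ x in atTop, u (x + h) ≤ r * u x := by
  rcases Nat.eq_zero_or_pos h with rfl | hh
  · exact (hpos.mono fun x hx => by simpa using le_mul_of_one_le_left hx.le hr.le).frequently
  by_contra hfreq
  obtain ⟨N, hN⟩ := eventually_atTop.mp (hpos.and (not_frequently.mp hfreq))
  have hexp : ∀ k : ℕ, u N * r ^ k ≤ u (N + h * k) := by
    intro k
    induction k with
    | zero => simp
    | succ k ih =>
      have hstep := not_le.mp (hN (N + h * k) (by omega)).2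
      calc u N * r ^ (k + 1) = r * (u N * r ^ k) := by ring
        _ ≤ r * u (N + h * k) := by gcongr
        _ ≤ u (N + h * (k + 1)) := by rw [mul_add_one, ← add_assoc]; exact hstep.le
  have hshift : Tendsto (fun k => N + h * k) atTop atTop :=
    tendsto_atTop_mono (fun k => show k ≤ N + h * k by nlinarith) tendsto_id
  have hbigO : (fun k : ℕ => r ^ k) =O[atTop] fun k : ℕ => (k : ℝ) := by
    calc (fun k : ℕ => r ^ k) =O[atTop] fun k => u (N + h * k) := by
          refine Asymptotics.IsBigO.of_bound (u N)⁻¹ (Eventually.of_forall fun k => ?_)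
          have huN := (hN N le_rfl).1
          rw [Real.norm_of_nonneg (by positivity), inv_mul_eq_div, le_div_iff₀ huN]
          linarith [hexp k, Real.le_norm_self (u (N + h * k))]
      _ =O[atTop] fun k => ((N + h * k : ℕ) : ℝ) := hlin.comp_tendsto hshift
      _ =O[atTop] fun k : ℕ => (k : ℝ) := by
          refine Asymptotics.IsBigO.of_bound (N + h) ((eventually_ge_atTop 1).mono fun k hk => ?_)
          simp only [Real.norm_natCast]
          exact_mod_cast (by nlinarith : N + h * k ≤ (N + h) * k)
  have hne : ∃ᶠ k in atTop, r ^ k ≠ 0 :=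
    (Eventually.of_forall fun k => (pow_pos (by linarith) k).ne').frequently
  exact Asymptotics.isLittleO_irrefl hne
    (hbigO.trans_isLittleO (isLittleO_coe_const_pow_of_one_lt hr))

theorem div_le_mul_div_of_le_mul {v p q r : ℝ} (hv : 0 ≤ v) (hp : 0 < p) (hpq : p ≤ q)
    (hqr : q ≤ r * p) : v / p ≤ r * (v / q) := by
  have hr : 0 < r := pos_of_mul_pos_left ((hp.trans_le hpq).trans_le hqr) hp.le
  calc v / p ≤ v / (q / r) :=
        div_le_div_of_nonneg_left hv (div_pos (hp.trans_le hpq) hr)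
          (by rwa [div_le_iff₀ hr, mul_comm])
    _ = r * (v / q) := by rw [div_div_eq_mul_div, mul_comm, mul_div_assoc]

theorem liminf_le_limsup_of_frequently_le_mul {ι : Type*} {l : Filter ι} {f g : ι → ℝ}
    (hf : IsBoundedUnder (· ≥ ·) l f) (hg : IsBoundedUnder (· ≤ ·) l g)
    (hfg : ∀ r > 1, ∃ᶠ x in l, f x ≤ r * g x) : liminf f l ≤ limsup g l := by
  refine le_of_forall_lt_imp_le_of_dense fun c hc => ?_
  have hcr : ∀ r > 1, c ≤ r * limsup g l := fun r hr => by
    have hfreq : ∃ᶠ x in l, c / r ≤ g x :=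
      ((eventually_lt_of_lt_liminf hc hf).and_frequently (hfg r hr)).mono fun x hx => by
        rw [div_le_iff₀ (by linarith)]; linarith
    have := le_limsup_of_frequently_le hfreq hg
    rwa [div_le_iff₀ (by linarith), mul_comm] at this
  have hlim : Tendsto (fun r : ℝ => r * limsup g l) (𝓝[>] 1) (𝓝 (limsup g l)) :=
    ((continuous_mul_const _).tendsto' 1 _ (one_mul _)).mono_left nhdsWithin_le_nhds
  exact ge_of_tendsto hlim (eventually_nhdsWithin_of_forall hcr)

theorem stmt5_general (a b : ℕ → ℕ) (ha : StrictMono a) (d : ℕ)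
    (hsA : Tendsto (sf a) atTop atTop)
    (hd : ∀ᶠ x in atTop, df a b x = d) :
    liminf (fun x : ℕ => (sf b x : ℝ) / (sf a (x - 2 * d) : ℝ)) atTop ≤
      limsup (fun x : ℕ => (sf b x : ℝ) / (sf a (x + 2 * d) : ℝ)) atTop := by
  have hsB := sf_le_mul_sf_add ha (dist_le_of_eventually_df_eq hd)
  have hpos : ∀ᶠ x in atTop, (0 : ℝ) < sf a x := by
    filter_upwards [hsA.eventually_gt_atTop 0] with x hx using by exact_mod_cast hx
  refine liminf_le_limsup_of_frequently_le_mul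
    (isBoundedUnder_of_eventually_ge (a := 0) (Eventually.of_forall fun x => by positivity))
    (isBoundedUnder_of_eventually_le (a := 4 * d + 1) (Eventually.of_forall fun x =>
      div_le_of_le_mul₀ (by positivity) (by positivity) (by exact_mod_cast hsB x)))
    fun r hr => (tendsto_add_atTop_nat (2 * d)).frequently ?_
  have hgrowth := frequently_apply_add_le_mul_of_isBigO hpos (isBigO_sf ha) (4 * d) hr
  refine (hgrowth.and_eventually hpos).mono fun y ⟨hgrow, hy⟩ => ?_
  rw [show y + 2 * d - 2 * d = y by omega, show y + 2 * d + 2 * d = y + 4 * d by omega]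
  exact div_le_mul_div_of_le_mul (by positivity) hy (by exact_mod_cast sf_mono a (by omega)) hgrow

theorem stmt5 (a b : ℕ → ℕ) (ha : StrictMono a) (hb : StrictMono b) (d : ℕ)
    (hsA : Tendsto (sf a) atTop atTop)
    (hd : ∀ᶠ x in atTop, df a b x = d) :
    liminf (fun x : ℕ => (sf b x : ℝ) / (sf a (x - 2 * d) : ℝ)) atTop ≤
      limsup (fun x : ℕ => (sf b x : ℝ) / (sf a (x + 2 * d) : ℝ)) atTop :=
  stmt5_general a b ha d hsA hd
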